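/- arXiv:1208.0616 — 8 statements merged into one kernel-verified Lean document; each statement's English description precedes it below -/
import Mathlib

section
/- Let V be a vector space over a field of characteristic p > 0 and let D, L be linear endomorphisms of V satisfying [D, L] = Id. Then Σ_{i=0}^{p-1} D^{p-1-i} ∘ L^{p-1} ∘ D^{i} = −Id. -/
/-!
Write `ad = mulLeft D - mulRight D` for the inner derivation `X ↦ DX - XD`. From `[D, L] = 1` one
gets `ad (L^(m+1)) = (m+1) L^m`, hence `ad^(p-1) (L^(p-1)) = (p-1)! = -1` by Wilson's theorem.
On the other hand `mulLeft D` and `mulRight D` commute, and in characteristic `p` the binomial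
coefficients `(p-1).choose i` are `(-1)^i`, so `(x - y)^(p-1) = ∑ x^(p-1-i) y^i` for commuting
`x, y`; applied to `L^(p-1)` this is the sum in the statement.
-/

open Finset
open scoped Nat

section PrimeCast

variable {R : Type*} [Ring R] {p : ℕ}

theorem Nat.cast_eq_zero_of_dvd (hpR : (p : R) = 0) {n : ℕ} (h : p ∣ n) : (n : R) = 0 := by
  obtain ⟨c, rfl⟩ := h
  rw [Nat.cast_mul, hpR, zero_mul]

theorem Nat.Prime.cast_factorial_pred (hp : p.Prime) (hpR : (p : R) = 0) :
    ((p - 1)! : R) = -1 := by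
  have : Fact p.Prime := ⟨hp⟩
  have hdvd : p ∣ (p - 1)! + 1 := by
    rw [← ZMod.natCast_eq_zero_iff, Nat.cast_add, ZMod.wilsons_lemma, Nat.cast_one, neg_add_cancel]
  have hzero := Nat.cast_eq_zero_of_dvd (R := R) hpR hdvd
  rwa [Nat.cast_succ, add_eq_zero_iff_eq_neg] at hzero

theorem Nat.Prime.cast_choose_pred (hp : p.Prime) (hpR : (p : R) = 0) {m : ℕ} (hm : m < p) :
    ((p - 1).choose m : R) = (-1) ^ m := by
  induction m with
  | zero => simp
  | succ m ih =>
    have hpascal : p.choose (m + 1) = (p - 1).choose m + (p - 1).choose (m + 1) := by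
      rw [← Nat.choose_succ_succ', Nat.sub_add_cancel hp.one_le]
    have hzero : (p.choose (m + 1) : R) = 0 :=
      Nat.cast_eq_zero_of_dvd hpR (hp.dvd_choose_self m.succ_ne_zero hm)
    rw [hpascal, Nat.cast_add, ih (by omega)] at hzero
    rw [pow_succ, mul_neg_one, eq_neg_of_add_eq_zero_right hzero]

end PrimeCast

theorem Commute.sub_pow_prime_sub_one {R : Type*} [Ring R] {p : ℕ} (hp : p.Prime)
    (hpR : (p : R) = 0) {x y : R} (h : Commute x y) :
    (x - y) ^ (p - 1) = ∑ i ∈ range p, x ^ (p - 1 - i) * y ^ i := by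
  rw [sub_eq_neg_add, h.neg_right.symm.add_pow, Nat.sub_add_cancel hp.one_le]
  refine sum_congr rfl fun m hm => ?_
  rw [hp.cast_choose_pred hpR (mem_range.mp hm)]
  rcases m.even_or_odd with hev | hodd
  · rw [hev.neg_pow, hev.neg_one_pow, mul_one, (h.pow_pow _ _).symm.eq]
  · rw [hodd.neg_pow, hodd.neg_one_pow, neg_mul, mul_neg_one, neg_neg, (h.pow_pow _ _).symm.eq]

section Commutator

variable {R : Type*} [Ring R] {D L : R}

theorem mul_pow_sub_pow_mul_eq_nsmul (h : D * L - L * D = 1) (m : ℕ) :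
    D * L ^ (m + 1) - L ^ (m + 1) * D = (m + 1) • L ^ m := by
  induction m with
  | zero => simpa using h
  | succ m ih =>
    calc D * L ^ (m + 2) - L ^ (m + 2) * D
        = (D * L ^ (m + 1) - L ^ (m + 1) * D) * L + L ^ (m + 1) * (D * L - L * D) := by
          rw [pow_succ _ (m + 1)]; noncomm_ring
      _ = (m + 2) • L ^ (m + 1) := by
          rw [ih, h, smul_mul_assoc, ← pow_succ, mul_one, ← succ_nsmul]

theorem mulLeft_sub_mulRight_pow_apply_pow (h : D * L - L * D = 1) (n m : ℕ) :
    ((LinearMap.mulLeft ℤ D - LinearMap.mulRight ℤ D) ^ n) (L ^ (m + n))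
      = (m + n).descFactorial n • L ^ m := by
  induction n generalizing m with
  | zero => simp
  | succ n ih =>
    rw [pow_succ, Module.End.mul_apply, LinearMap.sub_apply, LinearMap.mulLeft_apply,
      LinearMap.mulRight_apply, ← add_assoc, mul_pow_sub_pow_mul_eq_nsmul h, map_nsmul, ih,
      smul_smul, ← Nat.succ_descFactorial_succ]

end Commutator

theorem sum_pow_mul_pow_prime_sub_one_mul_pow {R : Type*} [Ring R] {p : ℕ} (hp : p.Prime)
    (hpR : (p : R) = 0) {D L : R} (h : D * L - L * D = 1) :
    ∑ i ∈ range p, D ^ (p - 1 - i) * L ^ (p - 1) * D ^ i = -1 := by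
  have hpEnd : (p : Module.End ℤ R) = 0 := by
    ext X
    rw [Module.End.natCast_apply, nsmul_eq_mul, hpR, zero_mul, LinearMap.zero_apply]
  calc ∑ i ∈ range p, D ^ (p - 1 - i) * L ^ (p - 1) * D ^ i
      = ((LinearMap.mulLeft ℤ D - LinearMap.mulRight ℤ D) ^ (p - 1)) (L ^ (0 + (p - 1))) := by
        rw [(LinearMap.commute_mulLeft_right D D).sub_pow_prime_sub_one hp hpEnd,
          LinearMap.sum_apply, zero_add]
        simp only [Module.End.mul_apply, LinearMap.pow_mulLeft, LinearMap.pow_mulRight,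
          LinearMap.mulLeft_apply, LinearMap.mulRight_apply, mul_assoc]
    _ = ((p - 1)! : R) := by
        rw [mulLeft_sub_mulRight_pow_apply_pow h, zero_add, Nat.descFactorial_self, pow_zero,
          nsmul_one]
    _ = -1 := hp.cast_factorial_pred hpR

/-- If `[D, L] = Id` on a vector space over a field of characteristic `p`, then
`Σ_{i=0}^{p-1} D^{p-1-i} ∘ L^{p-1} ∘ D^i = -Id`. -/
theorem stmt1 {p : ℕ} (hp : p.Prime) {k : Type} [Field k] [CharP k p]
    {V : Type} [AddCommGroup V] [Module k V]
    (D L : Module.End k V) (h : D * L - L * D = 1) :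
    ∑ i ∈ Finset.range p, D ^ (p - 1 - i) * L ^ (p - 1) * D ^ i = -1 := by
  refine sum_pow_mul_pow_prime_sub_one_mul_pow hp ?_ h
  rw [← map_natCast (algebraMap k (Module.End k V)), CharP.cast_eq_zero, map_zero]
end

section
/- Let V be a vector space over a field of characteristic p > 0 and D, L endomorphisms with [D, L] = Id. Then the iterated commutator (ad_D)^{p-1}(L^{p-1}) equals (p−1)!·Id = −Id, where ad_D(X) = DX − XD. -/
/-- If `[D, L] = Id` on a vector space over a field of characteristic `p`, then the
iterated commutator `(ad_D)^{p-1}(L^{p-1})` equals `-Id`. -/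
theorem stmt2 {p : ℕ} (hp : p.Prime) {k : Type} [Field k] [CharP k p]
    {V : Type} [AddCommGroup V] [Module k V]
    (D L : Module.End k V) (h : D * L - L * D = 1) :
    (fun X : Module.End k V => D * X - X * D)^[p - 1] (L ^ (p - 1)) = -1 := by
  haveI : Fact p.Prime := ⟨hp⟩
  set ad : Module.End k V → Module.End k V := fun X => D * X - X * D with had
  have ad_smul : ∀ (c : k) (X : Module.End k V), ad (c • X) = c • ad X := by
    intro c X
    simp only [had, mul_smul_comm, smul_mul_assoc, smul_sub]
  have iter_smul : ∀ (m : ℕ) (c : k) (X : Module.End k V),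
      ad^[m] (c • X) = c • ad^[m] X := by
    intro m
    induction m with
    | zero => simp
    | succ n ih =>
      intro c X
      simp only [Function.iterate_succ_apply, ad_smul, ih]
  have ad_pow : ∀ n : ℕ, ad (L ^ (n + 1)) = ((n + 1 : ℕ) : k) • L ^ n := by
    intro n
    induction n with
    | zero => simpa [had] using h
    | succ n ih =>
      have e1 : L ^ (n + 2) = L ^ (n + 1) * L := by rw [pow_succ]
      have e2 : ad (L ^ (n + 2)) = ad (L ^ (n + 1)) * L + L ^ (n + 1) * (D * L - L * D) := by
        simp only [had, e1]
        noncomm_ring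
      rw [e2, ih, h, mul_one, smul_mul_assoc, ← pow_succ]
      match_scalars
      ring
  have key : ∀ m : ℕ, ad^[m] (L ^ m) = ((m.factorial : ℕ) : k) • 1 := by
    intro m
    induction m with
    | zero => simp
    | succ n ih =>
      rw [Function.iterate_succ_apply, ad_pow, iter_smul, ih, Nat.factorial_succ]
      push_cast
      module
  have hw : (((p - 1).factorial : ℕ) : k) = -1 := by
    have : (((p - 1).factorial : ℕ) : ZMod p) = -1 := ZMod.wilsons_lemma p
    calc (((p - 1).factorial : ℕ) : k)
        = (ZMod.castHom (dvd_refl p) k) (((p - 1).factorial : ℕ) : ZMod p) := by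
          rw [map_natCast]
      _ = (ZMod.castHom (dvd_refl p) k) (-1) := by rw [this]
      _ = -1 := by rw [map_neg, map_one]
  show ad^[p - 1] (L ^ (p - 1)) = -1
  rw [key, hw, neg_smul, one_smul]
end

section
/- For any square matrix J over a commutative ring of prime characteristic p, the p-th iterate of the adjoint map ad_J (given by ad_J(M) = JM − MJ) equals ad_{J^p}; i.e., (ad_J)^p(M) = J^p M − M J^p for all matrices M. -/
/-- For square matrices over a commutative ring of prime characteristic `p`,
`(ad_J)^p M = J^p M - M J^p`. -/
theorem stmt3 {p : ℕ} (hp : p.Prime) {R : Type} [CommRing R] [CharP R p]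
    {n : ℕ} (J M : Matrix (Fin n) (Fin n) R) :
    (fun X : Matrix (Fin n) (Fin n) R => J * X - X * J)^[p] M = J ^ p * M - M * J ^ p := by
  rcases Nat.eq_zero_or_pos n with hn | hn
  · subst hn
    exact Subsingleton.elim _ _
  · haveI := Fact.mk hp
    haveI : Nontrivial R := CharP.nontrivial_of_char_ne_one hp.ne_one
    haveI : CharP (Module.End R (Matrix (Fin n) (Fin n) R)) p := by
      refine charP_of_injective_ringHom
        (f := algebraMap R (Module.End R (Matrix (Fin n) (Fin n) R))) ?_ p
      intro r s hrs
      have h1 : r • (1 : Matrix (Fin n) (Fin n) R) = s • (1 : Matrix (Fin n) (Fin n) R) := by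
        have := congrArg
          (fun φ : Module.End R (Matrix (Fin n) (Fin n) R) => φ (1 : Matrix (Fin n) (Fin n) R)) hrs
        simpa [Module.algebraMap_end_apply] using this
      have := congrArg (fun m : Matrix (Fin n) (Fin n) R => m ⟨0, hn⟩ ⟨0, hn⟩) h1
      simpa [Matrix.smul_apply, Matrix.one_apply] using this
    have hf : (fun X : Matrix (Fin n) (Fin n) R => J * X - X * J)
        = ⇑(LinearMap.mulLeft R J - LinearMap.mulRight R J) := by
      funext X; simp
    have key : (LinearMap.mulLeft R J - LinearMap.mulRight R J) ^ p
        = LinearMap.mulLeft R (J ^ p) - LinearMap.mulRight R (J ^ p) := by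
      rw [sub_pow_char_of_commute p (LinearMap.commute_mulLeft_right J J),
        LinearMap.pow_mulLeft, LinearMap.pow_mulRight]
    rw [hf, ← Module.End.pow_apply, key]
    simp
end

section
/- Let p be a prime and O_p = Z[q]/(1 + q^2 + ... + q^{2(p-1)}). For each 1 ≤ n ≤ p−1, the balanced quantum integer [n] = q^{n-1} + q^{n-3} + ... + q^{1-n} (equivalently (q^n − q^{-n})/(q − q^{-1}), noting q is invertible in O_p) is a unit in O_p. -/
/-!
Write `ζ = q²`, so that `O_p` is generated by `q` subject to `1 + ζ + ⋯ + ζ^{p-1} = 0`; in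
particular `ζ^p = 1` and `q^{2p} = 1`, so `q` is a unit. Up to the unit `q^{2p-n+1}`, `[n]` is the
geometric sum `S(n) = 1 + ζ + ⋯ + ζ^{n-1}`. Since `S(p) = 0`, `S(N)` only depends on `N mod p`,
and `S(a) · (1 + ζ^a + ⋯ + ζ^{a(b-1)}) = S(ab)`. As `n` is invertible mod `p`, choose `m` with
`nm ≡ 1 (mod p)`: then `S(n)` times a geometric sum in `ζ^n` is `S(nm) = S(1) = 1`.
-/

open Polynomial Finset

theorem pow_eq_one_of_geom_sum_eq_zero {R : Type*} [Ring R] {x : R} {p : ℕ}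
    (hx : ∑ i ∈ range p, x ^ i = 0) : x ^ p = 1 := by
  rw [← sub_eq_zero, ← geom_sum_mul, hx, zero_mul]

section GeomSum

variable {R : Type*} [CommSemiring R]

theorem geom_sum_range_add (x : R) (a b : ℕ) :
    ∑ i ∈ range (a + b), x ^ i = ∑ i ∈ range a, x ^ i + x ^ a * ∑ i ∈ range b, x ^ i := by
  rw [sum_range_add, mul_sum]
  simp only [pow_add]

theorem geom_sum_range_mul (x : R) (a b : ℕ) :
    ∑ i ∈ range (a * b), x ^ i = (∑ i ∈ range a, x ^ i) * ∑ j ∈ range b, (x ^ a) ^ j := by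
  induction b with
  | zero => simp
  | succ b ih =>
    rw [Nat.mul_succ, geom_sum_range_add, ih, geom_sum_succ', pow_mul]
    ring

variable {x : R} {p : ℕ}

theorem geom_sum_range_mod (hx : ∑ i ∈ range p, x ^ i = 0) (N : ℕ) :
    ∑ i ∈ range N, x ^ i = ∑ i ∈ range (N % p), x ^ i := by
  conv_lhs => rw [← Nat.mod_add_div N p]
  rw [geom_sum_range_add, geom_sum_range_mul, hx, zero_mul, mul_zero, add_zero]

theorem isUnit_geom_sum_of_coprime (hx : ∑ i ∈ range p, x ^ i = 0) (hp : 1 < p) {n : ℕ}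
    (hn : n.Coprime p) : IsUnit (∑ i ∈ range n, x ^ i) := by
  obtain ⟨m, -, hm⟩ := Nat.exists_mul_mod_eq_one_of_coprime hn hp
  refine IsUnit.of_mul_eq_one (∑ j ∈ range m, (x ^ n) ^ j) ?_
  rw [← geom_sum_range_mul, geom_sum_range_mod hx, hm, geom_sum_one]

end GeomSum

theorem sum_range_pow_sub_two_mul {R : Type*} [CommSemiring R] (q : R) {n N : ℕ}
    (hn : n ≤ N + 1) :
    ∑ t ∈ range n, q ^ (N + n - 1 - 2 * t) = q ^ (N + 1 - n) * ∑ i ∈ range n, (q ^ 2) ^ i := by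
  rw [← sum_range_reflect, mul_sum]
  refine sum_congr rfl fun t ht => ?_
  rw [← pow_mul, ← pow_add]
  have := mem_range.mp ht
  congr 1
  omega

/-- In `𝕆_p = ℤ[q]/(1 + q^2 + ⋯ + q^{2(p-1)})`, the balanced quantum integer
`[n] = q^{n-1} + q^{n-3} + ⋯ + q^{1-n}` is a unit for `1 ≤ n ≤ p-1`.  Since `q^{2p} = 1`
in `𝕆_p`, the balanced quantum integer equals `Σ_{t=0}^{n-1} q^{2p + n - 1 - 2t}`,
which is how it is written below with nonnegative exponents. -/
theorem stmt9 {p : ℕ} (hp : p.Prime) (n : ℕ) (h1 : 1 ≤ n) (h2 : n ≤ p - 1) :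
    IsUnit (∑ t ∈ Finset.range n,
      (Ideal.Quotient.mk (Ideal.span {∑ i ∈ Finset.range p, (X : ℤ[X]) ^ (2 * i)})
          (X : ℤ[X])) ^ (2 * p + n - 1 - 2 * t)) := by
  set q := Ideal.Quotient.mk (Ideal.span {∑ i ∈ range p, (X : ℤ[X]) ^ (2 * i)}) (X : ℤ[X])
  have hrel : ∑ i ∈ range p, (q ^ 2) ^ i = 0 := by
    simpa only [map_sum, map_pow, pow_mul] using
      Ideal.Quotient.eq_zero_iff_mem.mpr (Ideal.mem_span_singleton_self
        (∑ i ∈ range p, (X : ℤ[X]) ^ (2 * i)))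
  have hq : IsUnit q :=
    IsUnit.of_pow_eq_one (pow_mul q 2 p ▸ pow_eq_one_of_geom_sum_eq_zero hrel)
      (by have := hp.pos; omega)
  have hn : n.Coprime p := (Nat.coprime_of_lt_prime (by omega) (by omega) hp).symm
  rw [sum_range_pow_sub_two_mul q (by omega)]
  exact (hq.pow _).mul (isUnit_geom_sum_of_coprime hrel hp.one_lt hn)
end

section
/- Let k be a field of characteristic p and α ∈ k. Define a k-linear endomorphism d_α of k[x] by d_α(f) = ∂(f) + α·x·f, where ∂ is the derivation with ∂(x)=x^2. Then d_α^p(x^m) = (α^p − α)·x^{m+p} for all m ≥ 0; in particular d_α^p = 0 if and only if α^p = α (i.e., α lies in the prime field F_p). -/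
open Polynomial

/-- Key scalar identity: in characteristic `p`, `∏_{j<p} (c + j) = c^p - c`. -/
lemma keyProd {p : ℕ} (hp : p.Prime) {k : Type} [Field k] [CharP k p] (c : k) :
    ∏ j ∈ Finset.range p, (c + (j : k)) = c ^ p - c := by
  haveI : Fact p.Prime := ⟨hp⟩
  set φ : ZMod p →+* k := ZMod.castHom dvd_rfl k with hφ
  -- the polynomial identity over ZMod p
  have hmonic : (X ^ p - X : (ZMod p)[X]).Monic := by
    refine (monic_X_pow p).sub_of_left ?_
    rw [degree_X_pow, degree_X]
    exact_mod_cast hp.one_lt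
  have hdeg : (X ^ p - X : (ZMod p)[X]).natDegree = p :=
    FiniteField.X_pow_card_sub_X_natDegree_eq (ZMod p) hp.one_lt
  have hroots : (X ^ p - X : (ZMod p)[X]).roots = Finset.univ.val := by
    have := FiniteField.roots_X_pow_card_sub_X (ZMod p)
    rwa [ZMod.card] at this
  have hprod : (X ^ p - X : (ZMod p)[X]) = ∏ a : ZMod p, (X - C a) := by
    have h := prod_multiset_X_sub_C_of_monic_of_roots_card_eq hmonic
      (by rw [hroots, hdeg]; simp [Finset.card_univ, ZMod.card])
    rw [hroots] at h
    rw [← h]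
    rfl
  -- map to k and evaluate at c
  have heval : c ^ p - c = ∏ a : ZMod p, (c - φ a) := by
    have := congrArg (fun q => Polynomial.eval c (Polynomial.map φ q)) hprod
    simpa [Polynomial.eval_prod, Polynomial.map_prod] using this
  -- reindex: negate, then identify ZMod p with range p
  have hneg : ∏ a : ZMod p, (c - φ a) = ∏ a : ZMod p, (c + φ a) := by
    rw [← Equiv.prod_comp (Equiv.neg (ZMod p)) (fun a => (c + φ a))]
    apply Finset.prod_congr rfl
    intro a _
    simp [sub_eq_add_neg]
  have hre : ∏ j ∈ Finset.range p, (c + (j : k)) = ∏ a : ZMod p, (c + φ a) := by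
    refine Finset.prod_bij' (fun j _ => (j : ZMod p)) (fun a _ => a.val) ?_ ?_ ?_ ?_ ?_
    · intro j _; exact Finset.mem_univ _
    · intro a _; exact Finset.mem_range.mpr (ZMod.val_lt a)
    · intro j hj; exact ZMod.val_cast_of_lt (Finset.mem_range.mp hj)
    · intro a _; exact ZMod.natCast_rightInverse a
    · intro j _; rw [map_natCast]
  rw [hre, ← hneg, ← heval]

/-- Let `∂` be the derivation of `k[x]` with `∂(x) = x^2` over a field of characteristic
`p`, and `d_α(f) = ∂(f) + α·x·f`.  Then `d_α^p(x^m) = (α^p - α)·x^{m+p}` for all `m`, and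
`d_α^p = 0` iff `α^p = α`. -/
theorem stmt12 {p : ℕ} (hp : p.Prime) {k : Type} [Field k] [CharP k p]
    (D : Module.End k (Polynomial k))
    (hleib : ∀ f g : Polynomial k, D (f * g) = D f * g + f * D g)
    (hX : D X = X ^ 2)
    (α : k) (dα : Module.End k (Polynomial k))
    (hdα : ∀ f : Polynomial k, dα f = D f + C α * (X * f)) :
    (∀ m : ℕ, (dα ^ p) (X ^ m) = C (α ^ p - α) * X ^ (m + p)) ∧
      ((∀ f : Polynomial k, (dα ^ p) f = 0) ↔ α ^ p = α) := by
  haveI : Fact p.Prime := ⟨hp⟩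
  -- D on monomials
  have hD1 : D 1 = 0 := by
    have := hleib 1 1
    simpa using this.symm
  have hDm : ∀ m : ℕ, D (X ^ m) = C (m : k) * X ^ (m + 1) := by
    intro m
    induction m with
    | zero => simpa using hD1
    | succ m ih =>
      have : (X : Polynomial k) ^ (m + 1) = X * X ^ m := by ring
      rw [this, hleib, hX, ih]
      push_cast
      rw [C_add, C_1]
      ring
  -- dα on monomials
  have hdm : ∀ m : ℕ, dα (X ^ m) = C ((m : k) + α) * X ^ (m + 1) := by
    intro m
    rw [hdα, hDm, C_add]
    ring
  -- iterates of dα on monomials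
  have hiter : ∀ n m : ℕ,
      (dα ^ n) (X ^ m) = C (∏ j ∈ Finset.range n, ((m : k) + (j : k) + α)) * X ^ (m + n) := by
    intro n
    induction n with
    | zero => intro m; simp
    | succ n ih =>
      intro m
      rw [pow_succ', Module.End.mul_apply, ih m, ← smul_eq_C_mul, map_smul,
        smul_eq_C_mul, hdm (m + n), Finset.prod_range_succ, C_mul]
      push_cast
      ring
  -- the main computation
  have hmain : ∀ m : ℕ, (dα ^ p) (X ^ m) = C (α ^ p - α) * X ^ (m + p) := by
    intro m
    rw [hiter p m]
    congr 1
    have h1 : ∏ j ∈ Finset.range p, ((m : k) + (j : k) + α)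
        = ∏ j ∈ Finset.range p, (((m : k) + α) + (j : k)) := by
      apply Finset.prod_congr rfl; intro j _; ring
    rw [h1, keyProd hp ((m : k) + α)]
    have hmp : ((m : k)) ^ p = (m : k) := by
      have h2 : (ZMod.castHom dvd_rfl k) (m : ZMod p) = (m : k) :=
        map_natCast (ZMod.castHom dvd_rfl k) m
      rw [← h2, ← map_pow, ZMod.pow_card]
    rw [add_pow_char, hmp]
    congr 1
    ring
  refine ⟨hmain, ?_, ?_⟩
  · intro hzero
    have h := hmain 0
    rw [hzero (X ^ 0)] at h
    have : C (α ^ p - α) = 0 := by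
      by_contra hc
      exact (mul_ne_zero hc (pow_ne_zero _ X_ne_zero)) h.symm
    exact sub_eq_zero.mp (C_eq_zero.mp this)
  · intro hα f
    induction f using Polynomial.induction_on' with
    | add f g hf hg => rw [map_add, hf, hg, add_zero]
    | monomial n a =>
      rw [← C_mul_X_pow_eq_monomial, ← smul_eq_C_mul, map_smul, hmain n,
        hα, sub_self, C_0, zero_mul, smul_zero]
end

section
/- Let ∂ be the derivation on the polynomial ring k[x_1,...,x_n] (k a commutative ring) determined by ∂(x_i) = x_i^2 for all i. Then the elementary symmetric polynomials satisfy ∂(e_m) = e_1·e_m − (m+1)·e_{m+1} for 1 ≤ m < n, and ∂(e_n) = e_1·e_n. -/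
/-!
Both sides are sums over the `m`-subsets `A`. Since `∂` multiplies each `x_i` by `x_i`, it
multiplies the monomial `x_A` by `∑_{i ∈ A} x_i`, so `∂ e_m = ∑_A (∑_{i ∈ A} x_i) x_A`. Splitting
`e_1 = ∑_{i ∈ A} x_i + ∑_{i ∉ A} x_i` in `e_1 e_m`, the second part gives each `(m+1)`-subset once
for every element removed from it, i.e. `(m+1) e_{m+1}`.
-/

open MvPolynomial Finset

theorem Finset.sum_powersetCard_sum_sdiff_insert {α M : Type*} [DecidableEq α] [AddCommMonoid M]
    (s : Finset α) (m : ℕ) (f : Finset α → M) :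
    ∑ A ∈ powersetCard m s, ∑ i ∈ s \ A, f (insert i A)
      = (m + 1) • ∑ B ∈ powersetCard (m + 1) s, f B := by
  have hcount : ∀ B ∈ powersetCard (m + 1) s, ∑ _i ∈ B, f B = (m + 1) • f B := by
    intro B hB
    rw [sum_const, (mem_powersetCard.1 hB).2]
  rw [smul_sum, ← sum_congr rfl hcount, sum_sigma', sum_sigma']
  refine sum_nbij' (fun p => ⟨insert p.2 p.1, p.2⟩) (fun p => ⟨p.1.erase p.2, p.2⟩)
    ?_ ?_ ?_ ?_ fun _ _ => rfl
  · rintro ⟨A, i⟩ h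
    simp only [mem_sigma, mem_powersetCard, mem_sdiff] at h ⊢
    exact ⟨⟨insert_subset h.2.1 h.1.1, by rw [card_insert_of_notMem h.2.2, h.1.2]⟩,
      mem_insert_self _ _⟩
  · rintro ⟨B, i⟩ h
    simp only [mem_sigma, mem_powersetCard, mem_sdiff] at h ⊢
    exact ⟨⟨(erase_subset _ _).trans h.1.1, by rw [card_erase_of_mem h.2, h.1.2]; rfl⟩,
      h.1.1 h.2, notMem_erase _ _⟩
  · rintro ⟨A, i⟩ h
    simp only [mem_sigma, mem_sdiff] at h
    simp [erase_insert h.2.2]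
  · rintro ⟨B, i⟩ h
    simp only [mem_sigma] at h
    simp [insert_erase h.2]

theorem Derivation.map_prod_of_map_eq_mul {R A ι : Type*} [CommSemiring R] [CommSemiring A]
    [Algebra R A] (D : Derivation R A A) (s : Finset ι) {f g : ι → A}
    (hf : ∀ i ∈ s, D (f i) = g i * f i) :
    D (∏ i ∈ s, f i) = (∑ i ∈ s, g i) * ∏ i ∈ s, f i := by
  induction s using Finset.cons_induction with
  | empty => simp
  | cons i s hi ih =>
    rw [prod_cons, sum_cons, D.leibniz, smul_eq_mul, smul_eq_mul,
      ih fun j hj => hf j (mem_cons_of_mem hj), hf i (mem_cons_self i s)]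
    ring

namespace MvPolynomial

variable {σ R : Type*} [Fintype σ] [CommSemiring R]

theorem esymm_eq_zero_of_card_lt {m : ℕ} (h : Fintype.card σ < m) : esymm σ R m = 0 := by
  rw [esymm, powersetCard_eq_empty.2 (by rwa [card_univ]), sum_empty]

theorem derivation_esymm_of_map_X_eq_sq (D : Derivation R (MvPolynomial σ R) (MvPolynomial σ R))
    (hX : ∀ i, D (X i) = X i ^ 2) (m : ℕ) :
    D (esymm σ R m) = ∑ A ∈ powersetCard m univ, (∑ i ∈ A, X i) * ∏ i ∈ A, X i := by
  rw [esymm, map_sum]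
  exact sum_congr rfl fun A _ => D.map_prod_of_map_eq_mul A fun i _ => (hX i).trans (sq _)

theorem esymm_one_mul_esymm [DecidableEq σ] (m : ℕ) :
    esymm σ R 1 * esymm σ R m
      = ∑ A ∈ powersetCard m univ, (∑ i ∈ A, X i) * ∏ i ∈ A, X i
        + ((m : MvPolynomial σ R) + 1) * esymm σ R (m + 1) := by
  have hsplit : ∀ A : Finset σ, (∑ i, X i) * ∏ j ∈ A, X (R := R) j
      = (∑ i ∈ A, X i) * ∏ j ∈ A, X j + ∑ i ∈ univ \ A, ∏ j ∈ insert i A, X j := by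
    intro A
    rw [← sum_add_sum_compl A, add_mul, compl_eq_univ_sdiff, sum_mul (univ \ A)]
    refine congrArg _ (sum_congr rfl fun i hi => ?_)
    rw [prod_insert (mem_sdiff.1 hi).2]
  rw [esymm_one, esymm, mul_sum, sum_congr rfl fun A _ => hsplit A, sum_add_distrib,
    sum_powersetCard_sum_sdiff_insert univ m fun B => ∏ j ∈ B, (X j : MvPolynomial σ R), esymm,
    nsmul_eq_mul, Nat.cast_succ]

end MvPolynomial

/-- Let `∂` be the derivation of `k[x_1,…,x_n]` with `∂(x_i) = x_i^2`.  Then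
`∂(e_m) = e_1·e_m - (m+1)·e_{m+1}` for `1 ≤ m < n`, and `∂(e_n) = e_1·e_n`. -/
theorem stmt13 {k : Type} [CommRing k] {n : ℕ}
    (D : Module.End k (MvPolynomial (Fin n) k))
    (hleib : ∀ f g : MvPolynomial (Fin n) k, D (f * g) = D f * g + f * D g)
    (hX : ∀ i : Fin n, D (X i) = X i ^ 2) :
    (∀ m : ℕ, 1 ≤ m → m < n →
        D (esymm (Fin n) k m) =
          esymm (Fin n) k 1 * esymm (Fin n) k m
            - ((m : MvPolynomial (Fin n) k) + 1) * esymm (Fin n) k (m + 1)) ∧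
      D (esymm (Fin n) k n) = esymm (Fin n) k 1 * esymm (Fin n) k n := by
  let δ : Derivation k (MvPolynomial (Fin n) k) (MvPolynomial (Fin n) k) :=
    Derivation.mk' D fun f g => by rw [hleib, smul_eq_mul, smul_eq_mul]; ring
  have hD : ∀ m, D (esymm (Fin n) k m)
      = ∑ A ∈ powersetCard m univ, (∑ i ∈ A, X i) * ∏ i ∈ A, X i :=
    derivation_esymm_of_map_X_eq_sq δ hX
  refine ⟨fun m _ _ => ?_, ?_⟩
  · rw [hD, esymm_one_mul_esymm, add_sub_cancel_right]
  · rw [hD, esymm_one_mul_esymm, esymm_eq_zero_of_card_lt (by simp), mul_zero, add_zero]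
end

section
/- Let V be a finite-dimensional vector space over a field of characteristic p, with an endomorphism d satisfying d^p = 0. Then V is a free module over k[d]/(d^p) if and only if ker(d) = im(d^{p-1}). -/
/-!
Write `δ` for the class of `X` in `H = k[X]/(X^p)`. In `H` the annihilator of `δ` is `δ^(p-1) H`,
so on a free module `ker δ = im δ^(p-1)` coordinatewise. Conversely, lift a `k`-basis `bᵢ` of
`ker δ = im δ^(p-1)` to `wᵢ` with `δ^(p-1) wᵢ = bᵢ`. Since `δ^(p-1) a = ε(a) δ^(p-1)` for the
augmentation `ε : H → k`, multiplying a relation `∑ gᵢ wᵢ = 0` by `δ^(p-1-j)` shows by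
induction that `δ^j ∣ gᵢ` for all `j ≤ p`, so the `wᵢ` are independent; and a vector killed by
`δ^(j+1)` lies in their span because `δ^j v ∈ ker δ = δ^(p-1) · span(w)`, which reduces it to a
vector killed by `δ^j`.
-/

open Polynomial

theorem Module.Free.exists_smul_eq_of_smul_eq_zero {R M : Type*} [CommRing R] [AddCommGroup M]
    [Module R M] [Module.Free R M] {x y : R} (hann : ∀ a, x * a = 0 → y ∣ a) {v : M}
    (hv : x • v = 0) : ∃ u, y • u = v := by
  let B := Module.Free.chooseBasis R M
  have hcoord : ∀ i, y ∣ B.repr v i := fun i => hann _ <| by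
    simpa using congr($(congrArg B.repr hv) i)
  choose a ha using hcoord
  refine ⟨∑ i ∈ (B.repr v).support, a i • B i, ?_⟩
  simp_rw [Finset.smul_sum, smul_smul, ← ha]
  simpa [Finsupp.linearCombination_apply, Finsupp.sum] using B.linearCombination_repr v

namespace TruncatedPolynomial

variable {k : Type*} [Field k] {p : ℕ}

local notation "H" => k[X] ⧸ Ideal.span {(X : k[X]) ^ p}
local notation "δ" => Ideal.Quotient.mk (Ideal.span {(X : k[X]) ^ p}) X

theorem X_pow_eq_zero : (δ : H) ^ p = 0 := by
  rw [← map_pow, Ideal.Quotient.eq_zero_iff_mem]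
  exact Ideal.subset_span rfl

theorem X_pow_sub_one_dvd_of_X_mul_eq_zero (hp : 0 < p) {a : H} (h : δ * a = 0) :
    δ ^ (p - 1) ∣ a := by
  obtain ⟨f, rfl⟩ := Ideal.Quotient.mk_surjective a
  rw [← map_mul, Ideal.Quotient.eq_zero_iff_mem, Ideal.mem_span_singleton,
    ← Nat.sub_add_cancel hp, pow_succ', mul_dvd_mul_iff_left X_ne_zero] at h
  rw [← map_pow]
  exact map_dvd _ h

noncomputable def augmentation (hp : 0 < p) : H →ₐ[k] k :=
  Ideal.Quotient.liftₐ _ (aeval 0) fun a ha => by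
    obtain ⟨b, rfl⟩ := Ideal.mem_span_singleton.mp ha
    simp [zero_pow hp.ne']

theorem augmentation_mk (hp : 0 < p) (f : k[X]) :
    augmentation hp (Ideal.Quotient.mk _ f) = f.coeff 0 := by
  simp [augmentation, coeff_zero_eq_eval_zero]

theorem X_dvd_of_augmentation_eq_zero (hp : 0 < p) {a : H} (h : augmentation hp a = 0) :
    δ ∣ a := by
  obtain ⟨f, rfl⟩ := Ideal.Quotient.mk_surjective a
  rw [augmentation_mk] at h
  exact map_dvd _ (X_dvd_iff.mpr h)

theorem X_pow_sub_one_mul (hp : 0 < p) (a : H) :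
    δ ^ (p - 1) * a = augmentation hp a • δ ^ (p - 1) := by
  obtain ⟨f, rfl⟩ := Ideal.Quotient.mk_surjective a
  conv_lhs => rw [← X_mul_divX_add f]
  rw [augmentation_mk, map_add, map_mul, mul_add, ← mul_assoc, ← pow_succ,
    Nat.sub_add_cancel hp, X_pow_eq_zero, zero_mul, zero_add, C_eq_algebraMap,
    Ideal.Quotient.mk_algebraMap, mul_comm]
  exact (Algebra.smul_def _ _).symm

theorem X_pow_smul_eq_zero {V : Type*} [AddCommGroup V] [Module H V] (v : V) :
    (δ : H) ^ p • v = 0 := by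
  rw [X_pow_eq_zero]
  exact zero_smul H v

theorem ker_eq_range_of_free (hp : 0 < p) {V : Type*} [AddCommGroup V] [Module H V]
    [Module.Free H V] : {v : V | δ • v = 0} = Set.range fun v : V => δ ^ (p - 1) • v := by
  ext v
  refine ⟨Module.Free.exists_smul_eq_of_smul_eq_zero
    (fun _ => X_pow_sub_one_dvd_of_X_mul_eq_zero hp), ?_⟩
  rintro ⟨u, rfl⟩
  change δ • δ ^ (p - 1) • u = 0
  rw [smul_smul, ← pow_succ', Nat.sub_add_cancel hp, X_pow_smul_eq_zero]

section Lift

variable {V : Type*} [AddCommGroup V] [Module k V]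
  [Module (k[X] ⧸ Ideal.span {(X : k[X]) ^ p}) V]
  [IsScalarTower k (k[X] ⧸ Ideal.span {(X : k[X]) ^ p}) V]
  {ι : Type*} {b w : ι → V}

theorem X_pow_sub_one_smul_smul (hp : 0 < p) (hw : ∀ i, δ ^ (p - 1) • w i = b i) (a : H)
    (i : ι) : δ ^ (p - 1) • a • w i = augmentation hp a • b i := by
  rw [smul_smul, X_pow_sub_one_mul hp, smul_assoc, hw]

theorem linearIndependent_of_X_pow_sub_one_smul (hp : 0 < p) (hb : LinearIndependent k b)
    (hw : ∀ i, δ ^ (p - 1) • w i = b i) : LinearIndependent H w := by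
  rw [linearIndependent_iff]
  intro l hl
  have hdvd : ∀ j ≤ p, ∀ i, δ ^ j ∣ l i := by
    intro j
    induction j with
    | zero => simp
    | succ j ih =>
      intro hj
      choose a ha using ih (by omega)
      have hsum : ∑ i ∈ l.support, augmentation hp (a i) • b i = 0 := by
        calc _ = δ ^ (p - 1 - j) • Finsupp.linearCombination H w l := by
              rw [Finsupp.linearCombination_apply, Finsupp.sum, Finset.smul_sum]
              refine Finset.sum_congr rfl fun i _ => ?_
              rw [ha i, ← X_pow_sub_one_smul_smul hp hw, ← mul_smul, smul_smul, ← mul_assoc,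
                ← pow_add, Nat.sub_add_cancel (by omega)]
          _ = 0 := by rw [hl, smul_zero]
      intro i
      by_cases hi : i ∈ l.support
      · obtain ⟨c, hc⟩ :=
          X_dvd_of_augmentation_eq_zero hp (linearIndependent_iff'.mp hb _ _ hsum i hi)
        exact ⟨c, by rw [ha i, hc, pow_succ, mul_assoc]⟩
      · rw [Finsupp.notMem_support_iff.mp hi]
        exact dvd_zero _
  ext i
  obtain ⟨c, hc⟩ := hdvd p le_rfl i
  rw [hc, X_pow_eq_zero, zero_mul, Finsupp.zero_apply]

theorem span_eq_top_of_X_pow_sub_one_smul (hp : 0 < p)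
    (hb : {v : V | δ • v = 0} ⊆ Submodule.span k (Set.range b))
    (hw : ∀ i, δ ^ (p - 1) • w i = b i) : Submodule.span H (Set.range w) = ⊤ := by
  have hsoc : ∀ m ∈ Submodule.span k (Set.range b),
      ∃ u ∈ Submodule.span H (Set.range w), δ ^ (p - 1) • u = m := by
    intro m hm
    induction hm using Submodule.span_induction with
    | mem _ hx =>
      obtain ⟨i, rfl⟩ := hx
      exact ⟨w i, Submodule.subset_span ⟨i, rfl⟩, hw i⟩
    | zero => exact ⟨0, zero_mem _, smul_zero _⟩
    | add _ _ _ _ hx hy =>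
      obtain ⟨u, hu, rfl⟩ := hx
      obtain ⟨u', hu', rfl⟩ := hy
      exact ⟨u + u', add_mem hu hu', smul_add _ _ _⟩
    | smul c _ _ hx =>
      obtain ⟨u, hu, rfl⟩ := hx
      exact ⟨c • u, Submodule.smul_of_tower_mem _ c hu, smul_comm _ _ _⟩
  have hnil : ∀ j ≤ p, ∀ v : V, δ ^ j • v = 0 → v ∈ Submodule.span H (Set.range w) := by
    intro j
    induction j with
    | zero =>
      intro _ v hv
      rw [pow_zero, one_smul] at hv
      exact hv ▸ zero_mem _
    | succ j ih =>
      intro hj v hv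
      obtain ⟨u, hu, hxu⟩ :=
        hsoc _ (hb (show δ • δ ^ j • v = 0 by rwa [smul_smul, ← pow_succ']))
      have hvu : δ ^ j • (v - δ ^ (p - 1 - j) • u) = 0 := by
        rw [smul_sub, smul_smul, ← pow_add, Nat.add_sub_cancel' (by omega), hxu, sub_self]
      simpa using add_mem (ih (by omega) _ hvu) (Submodule.smul_mem _ (δ ^ (p - 1 - j)) hu)
  exact eq_top_iff.mpr fun v _ => hnil p le_rfl v (X_pow_smul_eq_zero v)

theorem free_of_ker_eq_range (hp : 0 < p)
    (h : {v : V | δ • v = 0} = Set.range fun v : V => δ ^ (p - 1) • v) : Module.Free H V := by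
  obtain ⟨t, hker, hspan, hind⟩ := exists_linearIndependent k {v : V | δ • v = 0}
  have hlift : ∀ b : t, ∃ u : V, δ ^ (p - 1) • u = b :=
    fun b => (Set.ext_iff.mp h b).mp (hker b.2)
  choose w hw using hlift
  have hb : {v : V | δ • v = 0} ⊆ Submodule.span k (Set.range ((↑) : t → V)) := by
    rw [Subtype.range_coe, hspan]
    exact Submodule.subset_span
  exact Module.Free.of_basis <|
    Module.Basis.mk (linearIndependent_of_X_pow_sub_one_smul hp hind hw)
      (span_eq_top_of_X_pow_sub_one_smul hp hb hw).ge

end Lift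

end TruncatedPolynomial

theorem stmt18_general {p : ℕ} (hp : p.Prime) {k : Type} [Field k]
    {V : Type} [AddCommGroup V] [Module k V]
    [Module (Polynomial k ⧸ Ideal.span {(X : Polynomial k) ^ p}) V]
    [IsScalarTower k (Polynomial k ⧸ Ideal.span {(X : Polynomial k) ^ p}) V] :
    Module.Free (Polynomial k ⧸ Ideal.span {(X : Polynomial k) ^ p}) V ↔
      {v : V | (Ideal.Quotient.mk (Ideal.span {(X : Polynomial k) ^ p}) X) • v = 0} =
        Set.range (fun v : V =>
          ((Ideal.Quotient.mk (Ideal.span {(X : Polynomial k) ^ p}) X) ^ (p - 1)) • v) :=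
  ⟨fun _ => TruncatedPolynomial.ker_eq_range_of_free hp.pos,
    TruncatedPolynomial.free_of_ker_eq_range hp.pos⟩

/-- Let `V` be a finite-dimensional vector space over a field `k` of characteristic `p`,
equipped with a module structure over `H = k[X]/(X^p)` (equivalently, with a `p`-nilpotent
endomorphism `d`, the action of `X`).  Then `V` is a free `H`-module if and only if
`ker d = im d^{p-1}`. -/
theorem stmt18 {p : ℕ} (hp : p.Prime) {k : Type} [Field k] [CharP k p]
    {V : Type} [AddCommGroup V] [Module k V]
    [Module (Polynomial k ⧸ Ideal.span {(X : Polynomial k) ^ p}) V]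
    [IsScalarTower k (Polynomial k ⧸ Ideal.span {(X : Polynomial k) ^ p}) V]
    [FiniteDimensional k V] :
    Module.Free (Polynomial k ⧸ Ideal.span {(X : Polynomial k) ^ p}) V ↔
      {v : V | (Ideal.Quotient.mk (Ideal.span {(X : Polynomial k) ^ p}) X) • v = 0} =
        Set.range (fun v : V =>
          ((Ideal.Quotient.mk (Ideal.span {(X : Polynomial k) ^ p}) X) ^ (p - 1)) • v) :=
  stmt18_general hp
end

section
/- Let V be a vector space over a field of characteristic p with an endomorphism d satisfying d^p = 0. For 1 ≤ k ≤ p−1 let _kH(V) := ker(d^k)/im(d^{p-k}) (Mayer cohomology), H_{/k-1}(V) := ker(d^k)/(im(d^{p-k}) + ker(d^{k-1})), and H_{\,p-k}(V) := (im(d^{p-k}) ∩ ker(d^{k-1}))/im(d^{p-k+1}). Then for each 2 ≤ k ≤ p−1 there is an exact sequence 0 → H_{\,p-k}(V) → _{k-1}H(V) → _kH(V) → H_{/k-1}(V) → 0, where the middle map is induced by the inclusion ker(d^{k-1}) ⊆ ker(d^k). -/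
open Submodule

/-- For a `p`-nilpotent endomorphism `d` of a vector space `V` over a field of
characteristic `p` and `2 ≤ m ≤ p-1`, there is an exact sequence
`0 → H_{\ p-m}(V) → _{m-1}H(V) → _mH(V) → H_{/m-1}(V) → 0`,
where `_mH = ker(d^m)/im(d^{p-m})` (Mayer cohomology),
`H_{/m-1} = ker(d^m)/(im(d^{p-m}) + ker(d^{m-1}))` (slash cohomology),
`H_{\ p-m} = (im(d^{p-m}) ∩ ker(d^{m-1}))/im(d^{p-m+1})` (backslash cohomology),
and the maps are the natural ones induced by inclusions and the identity. -/
theorem stmt19 {p : ℕ} (hp : p.Prime) {K : Type} [Field K] [CharP K p]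
    {V : Type} [AddCommGroup V] [Module K V]
    (d : Module.End K V) (hd : d ^ p = 0)
    (m : ℕ) (hm1 : 2 ≤ m) (hm2 : m ≤ p - 1)
    (A B I1 I2 : Submodule K V)
    (hA : A = LinearMap.ker (d ^ (m - 1)))
    (hB : B = LinearMap.ker (d ^ m))
    (hI1 : I1 = LinearMap.range (d ^ (p - m + 1)))
    (hI2 : I2 = LinearMap.range (d ^ (p - m)))
    (hAB : A ≤ B)
    -- the map `H_{\ p-m} = (I2 ⊓ A)/I1 → A/I1 = _{m-1}H` induced by the inclusion
    (f1 : (↥(I2 ⊓ A) ⧸ I1.comap (I2 ⊓ A).subtype) →ₗ[K] (↥A ⧸ I1.comap A.subtype))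
    (hf1 : ∀ x : ↥(I2 ⊓ A), f1 (Submodule.Quotient.mk x) =
      Submodule.Quotient.mk (Submodule.inclusion (inf_le_right : I2 ⊓ A ≤ A) x))
    -- the map `_{m-1}H = A/I1 → B/I2 = _mH` induced by the inclusion `ker(d^{m-1}) ⊆ ker(d^m)`
    (f2 : (↥A ⧸ I1.comap A.subtype) →ₗ[K] (↥B ⧸ I2.comap B.subtype))
    (hf2 : ∀ x : ↥A, f2 (Submodule.Quotient.mk x) =
      Submodule.Quotient.mk (Submodule.inclusion hAB x))
    -- the map `_mH = B/I2 → B/(I2 + A) = H_{/m-1}` induced by the identity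
    (f3 : (↥B ⧸ I2.comap B.subtype) →ₗ[K] (↥B ⧸ (I2 ⊔ A).comap B.subtype))
    (hf3 : ∀ x : ↥B, f3 (Submodule.Quotient.mk x) = Submodule.Quotient.mk x) :
    Function.Injective f1 ∧ Function.Exact f1 f2 ∧ Function.Exact f2 f3 ∧
      Function.Surjective f3 := by
  have hI12 : I1 ≤ I2 := by
    rw [hI1, hI2, pow_succ, Module.End.mul_eq_comp]
    exact LinearMap.range_comp_le_range _ _
  refine ⟨?_, ?_, ?_, ?_⟩
  · rw [← LinearMap.ker_eq_bot, eq_bot_iff]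
    intro x hx
    obtain ⟨y, rfl⟩ := Submodule.Quotient.mk_surjective _ x
    rw [LinearMap.mem_ker, hf1, Submodule.Quotient.mk_eq_zero, mem_comap] at hx
    rw [mem_bot, Submodule.Quotient.mk_eq_zero, mem_comap]
    exact hx
  · intro y
    obtain ⟨a, rfl⟩ := Submodule.Quotient.mk_surjective _ y
    rw [hf2, Submodule.Quotient.mk_eq_zero, mem_comap]
    constructor
    · intro ha
      refine ⟨Submodule.Quotient.mk ⟨(a : V), ha, a.2⟩, ?_⟩
      rw [hf1]
      rfl
    · rintro ⟨z, hz⟩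
      obtain ⟨w, rfl⟩ := Submodule.Quotient.mk_surjective _ z
      rw [hf1, Submodule.Quotient.eq, mem_comap] at hz
      have hwa : (a : V) = (w : V) - (A.subtype (Submodule.inclusion inf_le_right w - a)) := by
        simp
      show B.subtype (Submodule.inclusion hAB a) ∈ I2
      show (a : V) ∈ I2
      rw [hwa]
      exact sub_mem w.2.1 (hI12 hz)
  · intro y
    obtain ⟨b, rfl⟩ := Submodule.Quotient.mk_surjective _ y
    rw [hf3, Submodule.Quotient.mk_eq_zero, mem_comap]
    constructor
    · intro hb
      obtain ⟨i, hi, a, ha, hia⟩ := mem_sup.mp hb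
      refine ⟨Submodule.Quotient.mk ⟨a, ha⟩, ?_⟩
      rw [hf2, Submodule.Quotient.eq, mem_comap]
      have hv : (B.subtype) (Submodule.inclusion hAB ⟨a, ha⟩ - b) = -i := by
        rw [map_sub]
        show (a : V) - B.subtype b = -i
        rw [← hia]
        abel
      rw [hv]
      exact neg_mem hi
    · rintro ⟨z, hz⟩
      obtain ⟨w, rfl⟩ := Submodule.Quotient.mk_surjective _ z
      rw [hf2, Submodule.Quotient.eq, mem_comap] at hz
      have hwb : (b : V) = (w : V) - (B.subtype (Submodule.inclusion hAB w - b)) := by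
        simp
      show (b : V) ∈ I2 ⊔ A
      rw [hwb]
      exact sub_mem (mem_sup_right w.2) (mem_sup_left hz)
  · intro y
    obtain ⟨b, rfl⟩ := Submodule.Quotient.mk_surjective _ y
    exact ⟨Submodule.Quotient.mk b, hf3 b⟩
end
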